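/- Let n ≥ 2 and I = ({Y_iY_j}_{1≤i<j≤n}, X^3 + Σ_{i=2}^n L_i(Y_1^2 − Y_i^2)) in T = ℂ[X, Y_1,...,Y_n], where each L_i is a linear form. Suppose I is the ideal of a reduced set 𝕏 of 3n points. Then the Hilbert function of T/I is: 1 in degree 0, n+1 in degree 1, 2n+1 in degree 2, and 3n in every degree ≥ 3. -/

import Mathlib

open MvPolynomial
open scoped Classical

/-- Hilbert function in degree `d` of the graded quotient of the polynomial ring
by the `ℂ`-submodule `N`: the dimension of the image of the space of
degree-`d` homogeneous polynomials in the quotient. -/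
noncomputable def hfQ {σ : Type*} (N : Submodule ℂ (MvPolynomial σ ℂ)) (d : ℕ) : ℕ :=
  Module.finrank ℂ ((homogeneousSubmodule σ ℂ d).map N.mkQ)

/-- Homogeneous vanishing ideal of a set of projective points: all polynomials
vanishing on the corresponding lines through the origin. -/
noncomputable def projVanishingIdeal {σ : Type*} (S : Set (Projectivization ℂ (σ → ℂ))) :
    Ideal (MvPolynomial σ ℂ) :=
  ⨅ P ∈ S, ⨅ c : ℂ, RingHom.ker (MvPolynomial.eval (c • P.rep))

/-! Modulo the monomials `Y_i Y_j` (`i ≠ j`) the ideal is zero in degrees `≤ 2` and, in degree 3,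
consists of the multiples of the cubic generator `F`, whose only pure power of `X` is `X³`.
Precisely: the coefficients of an element of the ideal on the monomials of degree `≤ 3` not
divisible by any `Y_i Y_j` are proportional to those of `F`. These monomials are `X^d` and
`X^(d-k) Y_i^k` (`1 ≤ k ≤ d`), `1 + n d` of them in degree `d`; in degree 3 the relation `F`
removes `X³`, leaving `3n`.

For `d ≥ 3` the Hilbert function of the points is at most `|𝕏| = 3n`, because evaluation at the
points is injective on `T_d / I_d`, and it is non-decreasing, because multiplication by a linear
form vanishing at no point of `𝕏` is injective from `T_d / I_d` to `T_(d+1) / I_(d+1)`. -/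

namespace MvPolynomial

variable {σ R : Type*} [CommSemiring R]

theorem IsHomogeneous.eval_smul {p : MvPolynomial σ R} {d : ℕ} (hp : p.IsHomogeneous d)
    (c : R) (v : σ → R) : eval (c • v) p = c ^ d * eval v p := by
  rw [eval_eq, eval_eq, Finset.mul_sum]
  refine Finset.sum_congr rfl fun m hm => ?_
  have hdeg : ∑ i ∈ m.support, m i = d := by
    rw [← Finsupp.degree_apply, Finsupp.degree_eq_weight_one]
    exact hp (mem_support_iff.mp hm)
  simp only [Pi.smul_apply, smul_eq_mul, mul_pow, Finset.prod_mul_distrib,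
    Finset.prod_pow_eq_pow_sum, hdeg]
  ring

theorem IsHomogeneous.coeff_mul_of_degree_le {F : MvPolynomial σ R} {e : ℕ}
    (hF : F.IsHomogeneous e) (a : MvPolynomial σ R) {m : σ →₀ ℕ} (hm : m.degree ≤ e) :
    coeff m (a * F) = coeff 0 a * coeff m F := by
  rw [coeff_mul, Finset.sum_eq_single_of_mem (0, m) (by simp)]
  rintro ⟨u, v⟩ huv hne
  rw [Finset.HasAntidiagonal.mem_antidiagonal] at huv
  dsimp only at huv ⊢
  have hu : u ≠ 0 := by rintro rfl; simp_all
  have hv : v.degree ≠ e := by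
    have := (Finsupp.degree_eq_zero_iff u).not.mpr hu
    have := congrArg Finsupp.degree huv
    rw [map_add] at this
    omega
  rw [hF.coeff_eq_zero hv, mul_zero]

theorem exists_coeff_eq_mul_of_mem_span {A : Set (σ →₀ ℕ)} (hA : ∀ u v, u + v ∈ A → v ∈ A)
    {F : MvPolynomial σ R} {e : ℕ} (hF : F.IsHomogeneous e) (hAe : ∀ m ∈ A, m.degree ≤ e)
    {S : Set (MvPolynomial σ R)} (hS : ∀ g ∈ S, ∃ c, ∀ m ∈ A, coeff m g = c * coeff m F)
    {p : MvPolynomial σ R} (hp : p ∈ Ideal.span S) :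
    ∃ c, ∀ m ∈ A, coeff m p = c * coeff m F := by
  induction hp using Submodule.span_induction with
  | mem g hg => exact hS g hg
  | zero => exact ⟨0, by simp⟩
  | add p q _ _ hp hq =>
    obtain ⟨c, hc⟩ := hp
    obtain ⟨c', hc'⟩ := hq
    exact ⟨c + c', fun m hm => by rw [coeff_add, hc m hm, hc' m hm, add_mul]⟩
  | smul a p _ hp =>
    obtain ⟨c, hc⟩ := hp
    refine ⟨coeff 0 a * c, fun m hm => ?_⟩
    -- `A` is closed under divisors, so only the `A`-coefficients of `p` enter those of `a * p`
    have hmul : coeff m (a * p) = c * coeff m (a * F) := by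
      simp only [coeff_mul, Finset.mul_sum]
      refine Finset.sum_congr rfl fun ⟨u, v⟩ huv => ?_
      rw [hc v (hA u v (Finset.HasAntidiagonal.mem_antidiagonal.mp huv ▸ hm))]
      ring
    rw [smul_eq_mul, hmul, hF.coeff_mul_of_degree_le a (hAe m hm)]
    ring

theorem mem_of_forall_monomial_mem {V : Submodule R (MvPolynomial σ R)} {p : MvPolynomial σ R}
    (h : ∀ m ∈ p.support, monomial m 1 ∈ V) : p ∈ V := by
  rw [p.as_sum]
  refine Submodule.sum_mem _ fun m hm => ?_
  simpa [smul_monomial] using V.smul_mem (coeff m p) (h m hm)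

theorem homogeneousSubmodule_le_of_monomial_mem {V : Submodule R (MvPolynomial σ R)} {d : ℕ}
    (h : ∀ m : σ →₀ ℕ, m.degree = d → monomial m 1 ∈ V) : homogeneousSubmodule σ R d ≤ V :=
  fun p hp => mem_of_forall_monomial_mem fun m hm =>
    h m (by rw [Finsupp.degree_eq_weight_one]; exact hp (mem_support_iff.mp hm))

theorem coeff_single_eq_zero_of_mem_ideal_span_X_image {s : Set σ} {i : σ} (hi : i ∉ s)
    {p : MvPolynomial σ R} (hp : p ∈ Ideal.span (X '' s)) (k : ℕ) :
    coeff (Finsupp.single i k) p = 0 := by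
  by_contra h
  obtain ⟨j, hj, hij⟩ := mem_ideal_span_X_image.mp hp _ (mem_support_iff.mpr h)
  rw [Finsupp.single_apply_ne_zero] at hij
  exact hi (hij.1 ▸ hj)

section

variable {ι : Type*} [Fintype ι]

theorem coeff_sum_smul_monomial_of_injective {e : ι → σ →₀ ℕ} (he : Function.Injective e)
    (c : ι → R) (i : ι) : coeff (e i) (∑ j, c j • monomial (e j) (1 : R)) = c i := by
  simp [coeff_sum, coeff_monomial, he.eq_iff]

theorem coeff_sum_smul_monomial_of_forall_ne {e : ι → σ →₀ ℕ} {m : σ →₀ ℕ} (hm : ∀ j, e j ≠ m)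
    (c : ι → R) : coeff m (∑ j, c j • monomial (e j) (1 : R)) = 0 := by
  simp [coeff_sum, coeff_monomial, hm]

end

end MvPolynomial

namespace Submodule

variable {K M M' : Type*} [Field K] [AddCommGroup M] [Module K M] [AddCommGroup M'] [Module K M']
  {N W : Submodule K M}

theorem finrank_map_mkQ_eq_card {ι : Type*} [Fintype ι] (b : ι → M) (hb : ∀ i, b i ∈ W)
    (hW : W ≤ span K (Set.range b) ⊔ N) (hind : ∀ c : ι → K, ∑ i, c i • b i ∈ N → c = 0) :
    Module.finrank K (W.map N.mkQ) = Fintype.card ι := by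
  have hspan : W.map N.mkQ = span K (Set.range (N.mkQ ∘ b)) := by
    refine le_antisymm ?_ (span_le.mpr ?_)
    · calc W.map N.mkQ ≤ (span K (Set.range b) ⊔ N).map N.mkQ := map_mono hW
        _ = _ := by rw [map_sup, mkQ_map_self, sup_bot_eq, map_span, Set.range_comp]
    · rintro _ ⟨i, rfl⟩
      exact mem_map_of_mem (hb i)
  have hli : LinearIndependent K (N.mkQ ∘ b) := by
    refine Fintype.linearIndependent_iff.mpr fun c hc => congrFun (hind c ?_)
    rw [← Quotient.mk_eq_zero, ← mkQ_apply, map_sum]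
    simpa using hc
  rw [hspan, finrank_span_eq_card hli]

theorem finrank_map_mkQ_le_of_ker [FiniteDimensional K M'] (f : M →ₗ[K] M')
    (hN : N ≤ LinearMap.ker f) (hW : ∀ x ∈ W, f x = 0 → x ∈ N) :
    Module.finrank K (W.map N.mkQ) ≤ Module.finrank K M' := by
  refine LinearMap.finrank_le_finrank_of_injective
    (f := (N.liftQ f hN).comp (W.map N.mkQ).subtype) ?_
  rw [← LinearMap.ker_eq_bot, LinearMap.ker_eq_bot']
  rintro ⟨_, x, hx, rfl⟩ hfx
  ext
  simpa using hW x hx (by simpa using hfx)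

theorem finrank_map_mkQ_le_of_map {W' : Submodule K M} [FiniteDimensional K (W'.map N.mkQ)]
    (g : M →ₗ[K] M) (hN : N ≤ N.comap g) (hgW : W ≤ W'.comap g)
    (hW : ∀ x ∈ W, g x ∈ N → x ∈ N) :
    Module.finrank K (W.map N.mkQ) ≤ Module.finrank K (W'.map N.mkQ) := by
  have hmaps : ∀ y ∈ W.map N.mkQ, N.mapQ N g hN y ∈ W'.map N.mkQ := by
    rintro _ ⟨x, hx, rfl⟩
    exact ⟨g x, hgW hx, rfl⟩
  refine LinearMap.finrank_le_finrank_of_injective (f := (N.mapQ N g hN).restrict hmaps) ?_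
  rw [← LinearMap.ker_eq_bot, LinearMap.ker_eq_bot']
  rintro ⟨_, x, hx, rfl⟩ hgx
  ext
  simpa using hW x hx (by simpa [Subtype.ext_iff] using hgx)

end Submodule

namespace MvPolynomial

variable {σ : Type*}

theorem exists_isHomogeneous_one_forall_eval_ne_zero [Fintype σ] {K ι : Type*} [Field K]
    [Infinite K] [Finite ι] (v : ι → σ → K) (hv : ∀ i, v i ≠ 0) :
    ∃ ℓ : MvPolynomial σ K, ℓ.IsHomogeneous 1 ∧ ∀ i, eval (v i) ℓ ≠ 0 := by
  obtain ⟨f, hf⟩ := Module.exists_dual_forall_apply_ne_zero (K := K) v hv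
  refine ⟨∑ x, C (f fun y => if x = y then 1 else 0) * X x,
    IsHomogeneous.sum _ _ _ fun x _ => isHomogeneous_C_mul_X _ x, fun i => ?_⟩
  simpa [LinearMap.pi_apply_eq_sum_univ f (v i), mul_comm] using hf i

theorem IsHomogeneous.mem_projVanishingIdeal_iff {S : Set (Projectivization ℂ (σ → ℂ))}
    {p : MvPolynomial σ ℂ} {d : ℕ} (hp : p.IsHomogeneous d) :
    p ∈ projVanishingIdeal S ↔ ∀ P ∈ S, eval P.rep p = 0 := by
  simp only [projVanishingIdeal, Ideal.mem_iInf, RingHom.mem_ker, hp.eval_smul, mul_eq_zero]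
  exact ⟨fun h P hP => (h P hP 1).resolve_left (by simp), fun h P hP _ => Or.inr (h P hP)⟩

theorem eval_rep_eq_zero_of_mem_projVanishingIdeal {S : Set (Projectivization ℂ (σ → ℂ))}
    {p : MvPolynomial σ ℂ} (hp : p ∈ projVanishingIdeal S) {P : Projectivization ℂ (σ → ℂ)}
    (hP : P ∈ S) : eval P.rep p = 0 := by
  simp only [projVanishingIdeal, Ideal.mem_iInf, RingHom.mem_ker] at hp
  simpa using hp P hP 1

end MvPolynomial

theorem hfQ_projVanishingIdeal_le_card {σ : Type*} (S : Finset (Projectivization ℂ (σ → ℂ)))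
    (d : ℕ) : hfQ ((projVanishingIdeal (σ := σ) ↑S).restrictScalars ℂ) d ≤ S.card := by
  let evalS : MvPolynomial σ ℂ →ₗ[ℂ] (S → ℂ) :=
    LinearMap.pi fun P => (aeval (P : Projectivization ℂ (σ → ℂ)).rep).toLinearMap
  have hevalS : ∀ p P, evalS p P = eval (P : Projectivization ℂ (σ → ℂ)).rep p :=
    fun p P => by simp [evalS]
  have hle := Submodule.finrank_map_mkQ_le_of_ker
    (N := (projVanishingIdeal (σ := σ) ↑S).restrictScalars ℂ)
    (W := homogeneousSubmodule σ ℂ d) evalS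
    (fun p hp => funext fun P => by
      rw [hevalS]; exact eval_rep_eq_zero_of_mem_projVanishingIdeal hp P.2)
    (fun p hp hp0 => ((mem_homogeneousSubmodule d p).mp hp).mem_projVanishingIdeal_iff.mpr
      fun P hP => by rw [← hevalS p ⟨P, hP⟩, hp0]; rfl)
  simpa [hfQ] using hle

theorem hfQ_projVanishingIdeal_le_succ {σ : Type*} [Fintype σ]
    (S : Finset (Projectivization ℂ (σ → ℂ))) (d : ℕ) :
    hfQ ((projVanishingIdeal (σ := σ) ↑S).restrictScalars ℂ) d ≤
      hfQ ((projVanishingIdeal (σ := σ) ↑S).restrictScalars ℂ) (d + 1) := by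
  obtain ⟨ℓ, hℓ, hℓS⟩ := exists_isHomogeneous_one_forall_eval_ne_zero
    (fun P : S => (P : Projectivization ℂ (σ → ℂ)).rep) fun P => Projectivization.rep_nonzero _
  have : Module.Finite ℂ (homogeneousSubmodule σ ℂ (d + 1)) :=
    Module.Finite.iff_fg.mpr (homogeneousSubmodule_fg σ ℂ (d + 1))
  refine Submodule.finrank_map_mkQ_le_of_map (LinearMap.mulLeft ℂ ℓ)
    (fun p hp => Ideal.mul_mem_left _ ℓ hp) (fun p hp => ?_) (fun p hp hℓp => ?_)
  · simpa [add_comm] using hℓ.mul ((mem_homogeneousSubmodule d p).mp hp)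
  · have hp := (mem_homogeneousSubmodule d p).mp hp
    have hℓp := (hℓ.mul hp).mem_projVanishingIdeal_iff.mp hℓp
    exact hp.mem_projVanishingIdeal_iff.mpr fun P hP =>
      (mul_eq_zero.mp (by simpa using hℓp P hP)).resolve_left (hℓS ⟨P, hP⟩)

section YPairsCubic

variable {n : ℕ} {R : Type*}

def IsMixed (m : Unit ⊕ Fin n →₀ ℕ) : Prop :=
  ∃ i j, i ≠ j ∧ m (Sum.inr i) ≠ 0 ∧ m (Sum.inr j) ≠ 0

theorem IsMixed.add_left {u v : Unit ⊕ Fin n →₀ ℕ} (h : IsMixed v) : IsMixed (u + v) := by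
  obtain ⟨i, j, hij, hi, hj⟩ := h
  exact ⟨i, j, hij, by simp [hi], by simp [hj]⟩

noncomputable def yPairsCubicIdeal [CommSemiring R] (F : MvPolynomial (Unit ⊕ Fin n) R) :
    Ideal (MvPolynomial (Unit ⊕ Fin n) R) :=
  Ideal.span ({p | ∃ i j : Fin n, i < j ∧ p = X (Sum.inr i) * X (Sum.inr j)} ∪ {F})

theorem IsMixed.monomial_mem [CommSemiring R] {m : Unit ⊕ Fin n →₀ ℕ} (hm : IsMixed m)
    (F : MvPolynomial (Unit ⊕ Fin n) R) : monomial m 1 ∈ yPairsCubicIdeal F := by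
  obtain ⟨i, j, hij, hi, hj⟩ := hm
  wlog hlt : i < j generalizing i j
  · exact this j i hij.symm hj hi (lt_of_le_of_ne (not_lt.mp hlt) hij.symm)
  refine Ideal.mem_of_dvd _ ?_ (Ideal.subset_span (Or.inl ⟨i, j, hlt, rfl⟩))
  rw [X, X, monomial_mul, one_mul, monomial_dvd_monomial]
  refine ⟨Or.inr fun x => ?_, dvd_rfl⟩
  rcases x with _ | k
  · simp
  · by_cases hki : k = i <;> by_cases hkj : k = j <;> simp_all <;> omega

theorem exists_coeff_eq_mul_of_mem_yPairsCubicIdeal [CommSemiring R]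
    {F : MvPolynomial (Unit ⊕ Fin n) R} (hF : F.IsHomogeneous 3)
    {p : MvPolynomial (Unit ⊕ Fin n) R} (hp : p ∈ yPairsCubicIdeal F) :
    ∃ c, ∀ m, m.degree ≤ 3 → ¬IsMixed m → coeff m p = c * coeff m F := by
  obtain ⟨c, hc⟩ : ∃ c, ∀ m ∈ {m | m.degree ≤ 3 ∧ ¬IsMixed m}, coeff m p = c * coeff m F := by
    refine exists_coeff_eq_mul_of_mem_span (A := {m | m.degree ≤ 3 ∧ ¬IsMixed m})
      (fun u v ⟨h3, hmix⟩ => ⟨by rw [map_add] at h3; omega, fun h => hmix h.add_left⟩) hF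
      (fun m hm => hm.1) ?_ hp
    rintro g (⟨i, j, hij, rfl⟩ | rfl)
    · refine ⟨0, fun m ⟨_, hmix⟩ => ?_⟩
      rw [zero_mul, X, X, monomial_mul, coeff_monomial, if_neg]
      rintro rfl
      exact hmix ⟨i, j, hij.ne, by simp [hij.ne'], by simp⟩
    · exact ⟨1, fun m _ => (one_mul _).symm⟩
  exact ⟨c, fun m h3 hmix => hc m ⟨h3, hmix⟩⟩

noncomputable def pureExp (d : ℕ) : Option (Fin n × Fin d) → (Unit ⊕ Fin n →₀ ℕ)
  | none => Finsupp.single (Sum.inl ()) d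
  | some (i, k) => Finsupp.single (Sum.inl ()) (d - (k + 1 : ℕ))
      + Finsupp.single (Sum.inr i) (k + 1 : ℕ)

theorem degree_pureExp (d : ℕ) (o : Option (Fin n × Fin d)) : (pureExp d o).degree = d := by
  rcases o with _ | ⟨i, k⟩
  · simp [pureExp]
  · simp only [pureExp, map_add, Finsupp.degree_single]
    omega

theorem pureExp_injective (d : ℕ) : Function.Injective (pureExp (n := n) d) := by
  intro a b h
  have hX := DFunLike.congr_fun h (Sum.inl ())
  rcases a with _ | ⟨i, k⟩ <;> rcases b with _ | ⟨j, l⟩ <;> simp [pureExp] at hX ⊢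
  · omega
  · omega
  · obtain rfl : k = l := Fin.ext (by omega)
    simp only [pureExp, add_right_inj] at h
    rw [(Finsupp.single_left_injective (Nat.succ_ne_zero _)).eq_iff, Sum.inr.injEq] at h
    exact ⟨h, rfl⟩

theorem not_isMixed_pureExp (d : ℕ) (o : Option (Fin n × Fin d)) : ¬IsMixed (pureExp d o) := by
  rintro ⟨i, j, hij, hi, hj⟩
  rcases o with _ | ⟨l, k⟩
  · simp [pureExp] at hi
  · have hY : ∀ i', (pureExp d (some (l, k))) (Sum.inr i') ≠ 0 → i' = l := by
      intro i' hi'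
      by_contra h
      simp [pureExp, Ne.symm h] at hi'
    exact hij ((hY i hi).trans (hY j hj).symm)

theorem exists_pureExp_eq {d : ℕ} {m : Unit ⊕ Fin n →₀ ℕ} (hm : m.degree = d)
    (hmix : ¬IsMixed m) : ∃ o, pureExp d o = m := by
  by_cases hY : ∃ i, m (Sum.inr i) ≠ 0
  · obtain ⟨i, hi⟩ := hY
    have hm_eq : m = Finsupp.single (Sum.inl ()) (m (Sum.inl ()))
        + Finsupp.single (Sum.inr i) (m (Sum.inr i)) := by
      ext (_ | j)
      · simp
      · by_cases hji : j = i
        · simp [hji]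
        · have : m (Sum.inr j) = 0 := by
            by_contra hj
            exact hmix ⟨i, j, Ne.symm hji, hi, hj⟩
          simp [Ne.symm hji, this]
    have hdeg := congrArg Finsupp.degree hm_eq
    simp only [map_add, Finsupp.degree_single, hm] at hdeg
    refine ⟨some (i, ⟨m (Sum.inr i) - 1, by omega⟩), ?_⟩
    conv_rhs => rw [hm_eq]
    simp only [pureExp]
    congr 2 <;> omega
  · push Not at hY
    have hm_eq : m = Finsupp.single (Sum.inl ()) (m (Sum.inl ())) := by
      ext (_ | j) <;> simp [hY]
    refine ⟨none, ?_⟩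
    have hdeg := congrArg Finsupp.degree hm_eq
    rw [Finsupp.degree_single, hm] at hdeg
    rw [pureExp, hdeg, ← hm_eq]

end YPairsCubic

section HilbertFunction

variable {n : ℕ} {F : MvPolynomial (Unit ⊕ Fin n) ℂ}

theorem hfQ_yPairsCubicIdeal_of_lt_three (hF : F.IsHomogeneous 3) {d : ℕ} (hd : d < 3) :
    hfQ ((yPairsCubicIdeal F).restrictScalars ℂ) d = n * d + 1 := by
  have := Submodule.finrank_map_mkQ_eq_card (N := (yPairsCubicIdeal F).restrictScalars ℂ)
    (W := homogeneousSubmodule _ ℂ d) (fun o => monomial (pureExp d o) (1 : ℂ))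
    (fun o => (mem_homogeneousSubmodule _ _).mpr
      (isHomogeneous_monomial _ (degree_pureExp d o))) ?_ ?_
  · simpa [hfQ] using this
  · refine homogeneousSubmodule_le_of_monomial_mem fun m hm => ?_
    by_cases hmix : IsMixed m
    · exact Submodule.mem_sup_right (hmix.monomial_mem F)
    · obtain ⟨o, rfl⟩ := exists_pureExp_eq hm hmix
      exact Submodule.mem_sup_left (Submodule.subset_span ⟨o, rfl⟩)
  · intro c hc
    obtain ⟨c', hc'⟩ := exists_coeff_eq_mul_of_mem_yPairsCubicIdeal hF hc
    funext o
    have := hc' (pureExp d o) (by rw [degree_pureExp]; omega) (not_isMixed_pureExp d o)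
    rwa [hF.coeff_eq_zero (by rw [degree_pureExp]; omega), mul_zero,
      coeff_sum_smul_monomial_of_injective (pureExp_injective d)] at this

theorem hfQ_yPairsCubicIdeal_three (hF : F.IsHomogeneous 3)
    (hFX : coeff (Finsupp.single (Sum.inl ()) 3) F = 1) :
    hfQ ((yPairsCubicIdeal F).restrictScalars ℂ) 3 = 3 * n := by
  set N := (yPairsCubicIdeal F).restrictScalars ℂ
  set b := fun k : Fin n × Fin 3 => monomial (pureExp 3 (some k)) (1 : ℂ)
  set V := Submodule.span ℂ (Set.range b) ⊔ N
  have hV : ∀ m : Unit ⊕ Fin n →₀ ℕ, m.degree = 3 → m ≠ pureExp 3 none → monomial m 1 ∈ V := by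
    intro m hm hmX
    by_cases hmix : IsMixed m
    · exact Submodule.mem_sup_right (hmix.monomial_mem F)
    · obtain ⟨_ | k, rfl⟩ := exists_pureExp_eq hm hmix
      · exact absurd rfl hmX
      · exact Submodule.mem_sup_left (Submodule.subset_span ⟨k, rfl⟩)
  -- `X³ ≡ X³ - F` modulo the ideal, and `X³ - F` involves only the other cubic monomials
  have hX : monomial (pureExp 3 none) 1 ∈ V := by
    have hFV : F ∈ V := Submodule.mem_sup_right (Ideal.subset_span (Or.inr rfl))
    have hXF : monomial (pureExp 3 none) 1 - F ∈ V := by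
      refine mem_of_forall_monomial_mem fun m hm => hV m ?_ ?_
      · rw [Finsupp.degree_eq_weight_one]
        exact ((isHomogeneous_monomial _ (degree_pureExp 3 none)).sub hF)
          (mem_support_iff.mp hm)
      · rintro rfl
        simp [pureExp, hFX] at hm
    simpa using V.add_mem hXF hFV
  have hind : ∀ c : Fin n × Fin 3 → ℂ, ∑ k, c k • b k ∈ N → c = 0 := by
    intro c hc
    obtain ⟨c', hc'⟩ := exists_coeff_eq_mul_of_mem_yPairsCubicIdeal hF hc
    have hc'0 : c' = 0 := by
      have := hc' (pureExp 3 none) (by rw [degree_pureExp]) (not_isMixed_pureExp 3 none)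
      rwa [coeff_sum_smul_monomial_of_forall_ne (fun k => (pureExp_injective 3).ne (by simp)),
        pureExp, hFX, mul_one, eq_comm] at this
    funext k
    have hk := hc' (pureExp 3 (some k)) (by rw [degree_pureExp]) (not_isMixed_pureExp 3 _)
    rw [hc'0, zero_mul] at hk
    exact (coeff_sum_smul_monomial_of_injective (e := fun k => pureExp 3 (some k))
      ((pureExp_injective 3).comp (Option.some_injective _)) c k).symm.trans hk
  have := Submodule.finrank_map_mkQ_eq_card (W := homogeneousSubmodule _ ℂ 3) b
    (fun k => (mem_homogeneousSubmodule _ _).mpr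
      (isHomogeneous_monomial _ (degree_pureExp 3 _)))
    (homogeneousSubmodule_le_of_monomial_mem fun m hm => by
      by_cases hmX : m = pureExp 3 none
      · exact hmX ▸ hX
      · exact hV m hm hmX) hind
  simpa [hfQ, mul_comm] using this

end HilbertFunction

theorem isHomogeneous_X_pow_add_sum_mul_sub {n : ℕ} {R : Type*} [CommRing R]
    {L : Fin n → MvPolynomial (Unit ⊕ Fin n) R} (hL : ∀ i, (L i).IsHomogeneous 1)
    (s : Finset (Fin n)) (i₀ : Fin n) :
    (X (Sum.inl ()) ^ 3 + ∑ i ∈ s, L i * (X (Sum.inr i₀) ^ 2 - X (Sum.inr i) ^ 2)).IsHomogeneous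
      3 :=
  (isHomogeneous_X_pow _ 3).add <| IsHomogeneous.sum _ _ _ fun i _ =>
    (hL i).mul ((isHomogeneous_X_pow _ 2).sub (isHomogeneous_X_pow _ 2))

theorem coeff_X_pow_add_sum_mul_sub {n : ℕ} {R : Type*} [CommRing R]
    (L : Fin n → MvPolynomial (Unit ⊕ Fin n) R) (s : Finset (Fin n)) (i₀ : Fin n) :
    coeff (Finsupp.single (Sum.inl ()) 3)
      (X (Sum.inl ()) ^ 3 + ∑ i ∈ s, L i * (X (Sum.inr i₀) ^ 2 - X (Sum.inr i) ^ 2)) = 1 := by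
  have hY : ∀ i, (X (Sum.inr i) : MvPolynomial (Unit ⊕ Fin n) R) ^ 2 ∈
      Ideal.span (X '' Set.range Sum.inr) :=
    fun i => Ideal.pow_mem_of_mem _
      (Ideal.subset_span (Set.mem_image_of_mem X (Set.mem_range_self i))) 2 two_pos
  rw [coeff_add, coeff_X_pow, if_pos rfl, coeff_single_eq_zero_of_mem_ideal_span_X_image
    (by simp) (Ideal.sum_mem _ fun i _ => Ideal.mul_mem_left _ _ (sub_mem (hY i₀) (hY i))),
    add_zero]

/-- For `n ≥ 2`, if `I = ({Y_iY_j}_{i<j}, X^3 + Σ_{i≥2} L_i(Y_1^2 − Y_i^2))` (with the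
`L_i` linear forms) is the vanishing ideal of a reduced set `𝕏` of `3n` points, then the
Hilbert function of `T/I` is `1, n+1, 2n+1` in degrees `0,1,2` and `3n` in degrees `≥ 3`. -/
theorem statement19 (n : ℕ) (hn : 2 ≤ n)
    (L : Fin n → MvPolynomial (Unit ⊕ Fin n) ℂ) (hL : ∀ i, (L i).IsHomogeneous 1) :
    let Y : Fin n → MvPolynomial (Unit ⊕ Fin n) ℂ := fun i => X (Sum.inr i)
    let I : Ideal (MvPolynomial (Unit ⊕ Fin n) ℂ) := Ideal.span
      ({p | ∃ i j : Fin n, i < j ∧ p = Y i * Y j} ∪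
       {(X (Sum.inl ())) ^ 3 + ∑ i ∈ Finset.univ.erase ⟨0, by omega⟩,
          L i * ((Y ⟨0, by omega⟩) ^ 2 - (Y i) ^ 2)})
    (∃ 𝕏 : Finset (Projectivization ℂ ((Unit ⊕ Fin n) → ℂ)),
      𝕏.card = 3 * n ∧ I = projVanishingIdeal ↑𝕏) →
    hfQ (Submodule.restrictScalars ℂ I) 0 = 1 ∧
    hfQ (Submodule.restrictScalars ℂ I) 1 = n + 1 ∧
    hfQ (Submodule.restrictScalars ℂ I) 2 = 2 * n + 1 ∧
    ∀ d, 3 ≤ d → hfQ (Submodule.restrictScalars ℂ I) d = 3 * n := by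
  intro Y I h
  obtain ⟨𝕏, hcard, hI⟩ := h
  have hF := isHomogeneous_X_pow_add_sum_mul_sub hL (Finset.univ.erase ⟨0, by omega⟩)
    ⟨0, by omega⟩
  have hlow (d : ℕ) (hd : d < 3) : hfQ (Submodule.restrictScalars ℂ I) d = n * d + 1 :=
    hfQ_yPairsCubicIdeal_of_lt_three hF hd
  refine ⟨by simpa using hlow 0, by simpa using hlow 1, by simpa [mul_comm] using hlow 2,
    fun d hd => ?_⟩
  induction d, hd using Nat.le_induction with
  | base => exact hfQ_yPairsCubicIdeal_three hF (coeff_X_pow_add_sum_mul_sub L _ _)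
  | succ d _ ih =>
    rw [hI] at ih ⊢
    exact le_antisymm (hcard ▸ hfQ_projVanishingIdeal_le_card 𝕏 (d + 1))
      (ih ▸ hfQ_projVanishingIdeal_le_succ 𝕏 d)
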